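/- For the map f : ℝ³ → ℝ⁴, f(x,y,z) = cosh(z)•(xy+1, x+y/2, xy, x-y/2) - sinh(z)•(xy, x-y/2, xy+1, x+y/2), the position vector f(x,y,z) is transversal to the image of the differential df at every point: the vectors f_x, f_y, f_z, f are linearly independent in ℝ⁴ at every (x,y,z) ∈ ℝ³. -/

import Mathlib

/-- The example hypersurface, curried. -/
noncomputable def exf (x y z : ℝ) : Fin 4 → ℝ :=
  Real.cosh z • (![x * y + 1, x + y / 2, x * y, x - y / 2])
    - Real.sinh z • (![x * y, x - y / 2, x * y + 1, x + y / 2])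

/-!
Writing `P` for the involution `(a, b, c, d) ↦ (c, d, a, b)` of `ℝ⁴`, we have
`f(x, y, z) = B_z (f₀(x, y))` with `f₀ = f(·, ·, 0)` and the hyperbolic rotation
`B_z = cosh z - sinh z • P`. Since `P² = 1`, `B_{-z}` inverts `B_z` and `∂_z B_z = -B_z P`,
so `f_x, f_y, f_z, f` are the images under the injective map `B_z` of
`∂_x f₀, ∂_y f₀, -P f₀, f₀`, whose determinant is identically `1`.
-/

open Real

theorem LinearMap.hasDerivAt_add_smul {𝕜 E F : Type*} [NontriviallyNormedField 𝕜]
    [NormedAddCommGroup E] [NormedSpace 𝕜 E] [NormedAddCommGroup F] [NormedSpace 𝕜 F]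
    (L : E →ₗ[𝕜] F) (a b : E) (t : 𝕜) :
    HasDerivAt (fun s : 𝕜 => L (a + s • b)) (L b) t := by
  simp only [map_add, map_smul]
  simpa using ((hasDerivAt_id t).smul_const (L b)).const_add (L a)

section HyperbolicRotation

variable {E : Type*} [NormedAddCommGroup E] [NormedSpace ℝ E]

noncomputable def hypRot (P : E →ₗ[ℝ] E) (z : ℝ) : E →ₗ[ℝ] E :=
  cosh z • LinearMap.id - sinh z • P

variable {P : E →ₗ[ℝ] E}

theorem hypRot_apply (z : ℝ) (v : E) : hypRot P z v = cosh z • v - sinh z • P v := rfl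

theorem hypRot_neg_hypRot (hP : Function.Involutive P) (z : ℝ) (v : E) :
    hypRot P (-z) (hypRot P z v) = v := by
  simp only [hypRot_apply, cosh_neg, sinh_neg, map_sub, map_smul, hP v]
  linear_combination (norm := module) cosh_sq_sub_sinh_sq z • v

theorem hypRot_injective (hP : Function.Involutive P) (z : ℝ) : Function.Injective (hypRot P z) :=
  Function.LeftInverse.injective (hypRot_neg_hypRot hP z)

theorem hasDerivAt_hypRot (hP : Function.Involutive P) (v : E) (z : ℝ) :
    HasDerivAt (fun t => hypRot P t v) (-hypRot P z (P v)) z := by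
  refine (((hasDerivAt_cosh z).smul_const v).sub
    ((hasDerivAt_sinh z).smul_const (P v))).congr_deriv ?_
  simp only [hypRot_apply, hP v]
  module

end HyperbolicRotation

def pairSwap : (Fin 4 → ℝ) →ₗ[ℝ] Fin 4 → ℝ := LinearMap.funLeft ℝ ℝ (· + 2)

@[simp]
theorem pairSwap_vecCons (a b c d : ℝ) : pairSwap ![a, b, c, d] = ![c, d, a, b] := by
  ext i; fin_cases i <;> rfl

theorem pairSwap_involutive : Function.Involutive pairSwap := by
  intro v; ext i; fin_cases i <;> rfl

noncomputable def exf₀ (x y : ℝ) : Fin 4 → ℝ := ![x * y + 1, x + y / 2, x * y, x - y / 2]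

theorem exf_eq_hypRot_exf₀ (x y z : ℝ) : exf x y z = hypRot pairSwap z (exf₀ x y) := by
  rw [exf, exf₀, hypRot_apply, pairSwap_vecCons]

theorem exf₀_eq_add_smul_left (x y : ℝ) :
    exf₀ x y = ![1, y / 2, 0, -(y / 2)] + x • ![y, 1, y, 1] := by
  ext i; fin_cases i <;> simp [exf₀] <;> ring

theorem exf₀_eq_add_smul_right (x y : ℝ) :
    exf₀ x y = ![1, x, 0, x] + y • ![x, 1 / 2, x, -(1 / 2)] := by
  ext i; fin_cases i <;> simp [exf₀] <;> ring

theorem deriv_exf_left (x y z : ℝ) :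
    deriv (fun t => exf t y z) x = hypRot pairSwap z ![y, 1, y, 1] := by
  simp only [exf_eq_hypRot_exf₀, exf₀_eq_add_smul_left]
  exact ((hypRot pairSwap z).hasDerivAt_add_smul _ _ x).deriv

theorem deriv_exf_right (x y z : ℝ) :
    deriv (fun t => exf x t z) y = hypRot pairSwap z ![x, 1 / 2, x, -(1 / 2)] := by
  simp only [exf_eq_hypRot_exf₀, exf₀_eq_add_smul_right]
  exact ((hypRot pairSwap z).hasDerivAt_add_smul _ _ y).deriv

theorem deriv_exf_height (x y z : ℝ) :
    deriv (fun t => exf x y t) z = hypRot pairSwap z (-pairSwap (exf₀ x y)) := by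
  simp only [exf_eq_hypRot_exf₀, map_neg]
  exact (hasDerivAt_hypRot pairSwap_involutive _ z).deriv

theorem det_exf₀_frame (x y : ℝ) :
    (Matrix.of ![![y, 1, y, 1], ![x, 1 / 2, x, -(1 / 2)], -pairSwap (exf₀ x y), exf₀ x y]).det
      = 1 := by
  rw [Matrix.det_succ_row_zero]
  simp [Fin.sum_univ_succ, Matrix.det_fin_three, Fin.succAbove, exf₀]
  ring

/-- the partial derivatives `f_x, f_y, f_z` together with the position
vector `f` are linearly independent at every point, i.e. the position vector is
transversal to the image of the differential. -/
theorem stmt11 (x y z : ℝ) :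
    LinearIndependent ℝ
      ![deriv (fun t => exf t y z) x,
        deriv (fun t => exf x t z) y,
        deriv (fun t => exf x y t) z,
        exf x y z] := by
  have hframe := Matrix.linearIndependent_rows_of_det_ne_zero
    (det_exf₀_frame x y ▸ one_ne_zero)
  have h := hframe.map_injOn _ (hypRot_injective pairSwap_involutive z).injOn
  rw [← FinVec.map_eq] at h
  rwa [deriv_exf_left, deriv_exf_right, deriv_exf_height, exf_eq_hypRot_exf₀]
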